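/- arXiv:2604.01466 — 3 statements merged into one kernel-verified Lean document; each statement's English description precedes it below -/
import Mathlib

section
/- The inner product ⟨x,y⟩ := x'y' + x₁y₁ + x₂y₂ + x₁₂y₁₂ on R*_{2,0,1} is invariant under simultaneous sandwich conjugation by any translation t = 1 - (a/2)e₀₁ + (b/2)e₂₀ or rotation r = cos(θ/2) - sin(θ/2)e₁₂: ⟨uxu⁻¹, uyu⁻¹⟩ = ⟨x,y⟩ for u = t or u = r. -/
noncomputable section

/-- The projective geometric algebra `ℝ*_{2,0,1}`, represented by coefficients over the
basis `1, e₀, e₁, e₂, e₀₁, e₂₀, e₁₂, e₀₁₂` (generators `e₀, e₁, e₂` with `e₀² = 0`,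
`e₁² = e₂² = 1`, distinct generators anticommuting). -/
@[ext] structure GA where
  s : ℝ
  c0 : ℝ
  c1 : ℝ
  c2 : ℝ
  c01 : ℝ
  c20 : ℝ
  c12 : ℝ
  c012 : ℝ

namespace GA

instance : Zero GA := ⟨⟨0, 0, 0, 0, 0, 0, 0, 0⟩⟩
instance : One GA := ⟨⟨1, 0, 0, 0, 0, 0, 0, 0⟩⟩
instance : Add GA :=
  ⟨fun a b => ⟨a.s + b.s, a.c0 + b.c0, a.c1 + b.c1, a.c2 + b.c2,
    a.c01 + b.c01, a.c20 + b.c20, a.c12 + b.c12, a.c012 + b.c012⟩⟩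
instance : Neg GA :=
  ⟨fun a => ⟨-a.s, -a.c0, -a.c1, -a.c2, -a.c01, -a.c20, -a.c12, -a.c012⟩⟩
instance : Sub GA := ⟨fun a b => a + -b⟩
instance : SMul ℝ GA :=
  ⟨fun r a => ⟨r * a.s, r * a.c0, r * a.c1, r * a.c2,
    r * a.c01, r * a.c20, r * a.c12, r * a.c012⟩⟩

/-- The geometric (Clifford) product of `ℝ*_{2,0,1}`. -/
instance : Mul GA :=
  ⟨fun a b =>
    ⟨a.s * b.s + a.c1 * b.c1 + a.c2 * b.c2 - a.c12 * b.c12,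
     a.s * b.c0 + a.c0 * b.s - a.c1 * b.c01 + a.c01 * b.c1 + a.c2 * b.c20 - a.c20 * b.c2
       - a.c12 * b.c012 - a.c012 * b.c12,
     a.s * b.c1 + a.c1 * b.s - a.c2 * b.c12 + a.c12 * b.c2,
     a.s * b.c2 + a.c2 * b.s + a.c1 * b.c12 - a.c12 * b.c1,
     a.s * b.c01 + a.c01 * b.s + a.c0 * b.c1 - a.c1 * b.c0 + a.c20 * b.c12 - a.c12 * b.c20
       + a.c2 * b.c012 + a.c012 * b.c2,
     a.s * b.c20 + a.c20 * b.s + a.c2 * b.c0 - a.c0 * b.c2 - a.c01 * b.c12 + a.c12 * b.c01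
       + a.c1 * b.c012 + a.c012 * b.c1,
     a.s * b.c12 + a.c12 * b.s + a.c1 * b.c2 - a.c2 * b.c1,
     a.s * b.c012 + a.c012 * b.s + a.c0 * b.c12 + a.c12 * b.c0 + a.c1 * b.c20
       + a.c20 * b.c1 + a.c2 * b.c01 + a.c01 * b.c2⟩⟩

def e0 : GA := ⟨0, 1, 0, 0, 0, 0, 0, 0⟩
def e1 : GA := ⟨0, 0, 1, 0, 0, 0, 0, 0⟩
def e2 : GA := ⟨0, 0, 0, 1, 0, 0, 0, 0⟩
def e01 : GA := ⟨0, 0, 0, 0, 1, 0, 0, 0⟩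
def e20 : GA := ⟨0, 0, 0, 0, 0, 1, 0, 0⟩
def e12 : GA := ⟨0, 0, 0, 0, 0, 0, 1, 0⟩
def e012 : GA := ⟨0, 0, 0, 0, 0, 0, 0, 1⟩

/-- Encoding of the point `(x, y)` as `x e₂₀ + y e₀₁ + e₁₂`. -/
def pt (x y : ℝ) : GA := x • e20 + y • e01 + e12

/-- Encoding of the line `a x + b y + c = 0` as `a e₁ + b e₂ + c e₀`. -/
def line (a b c : ℝ) : GA := a • e1 + b • e2 + c • e0

/-- Encoding of the translation by `(a, b)`: `t = 1 - (a/2) e₀₁ + (b/2) e₂₀`. -/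
def transl (a b : ℝ) : GA := 1 - (a / 2) • e01 + (b / 2) • e20

/-- The inverse of the translation by `(a, b)`. -/
def translInv (a b : ℝ) : GA := 1 + (a / 2) • e01 - (b / 2) • e20

/-- Encoding of the counterclockwise rotation by angle `θ`:
`r = cos(θ/2) - sin(θ/2) e₁₂`. -/
def rot (θ : ℝ) : GA := Real.cos (θ / 2) • 1 - Real.sin (θ / 2) • e12

/-- The inverse of the rotation by angle `θ`. -/
def rotInv (θ : ℝ) : GA := Real.cos (θ / 2) • 1 + Real.sin (θ / 2) • e12

/-- The exterior (wedge) product on `ℝ*_{2,0,1}`: bilinear, with `eᵢ ∧ eⱼ = eᵢ eⱼ` for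
distinct generators and `v ∧ v = 0` for vectors. -/
def wedge (a b : GA) : GA :=
  ⟨a.s * b.s,
   a.s * b.c0 + a.c0 * b.s,
   a.s * b.c1 + a.c1 * b.s,
   a.s * b.c2 + a.c2 * b.s,
   a.s * b.c01 + a.c01 * b.s + a.c0 * b.c1 - a.c1 * b.c0,
   a.s * b.c20 + a.c20 * b.s + a.c2 * b.c0 - a.c0 * b.c2,
   a.s * b.c12 + a.c12 * b.s + a.c1 * b.c2 - a.c2 * b.c1,
   a.s * b.c012 + a.c012 * b.s + a.c0 * b.c12 + a.c12 * b.c0 + a.c1 * b.c20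
     + a.c20 * b.c1 + a.c2 * b.c01 + a.c01 * b.c2⟩

/-- The multivector dual: reverses the coefficient order on the basis
`1, e₀, e₁, e₂, e₀₁, e₂₀, e₁₂, e₀₁₂`. -/
def dual (a : GA) : GA := ⟨a.c012, a.c12, a.c20, a.c01, a.c2, a.c1, a.c0, a.s⟩

/-- The join operator: `Join(x, y) = (x* ∧ y*)*`. -/
def join (a b : GA) : GA := dual (wedge (dual a) (dual b))

end GA

open GA

/-- The invariant inner product `⟨x, y⟩ = x' y' + x₁ y₁ + x₂ y₂ + x₁₂ y₁₂`, ignoring the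
components containing `e₀`. -/
def iprod (x y : GA) : ℝ := x.s * y.s + x.c1 * y.c1 + x.c2 * y.c2 + x.c12 * y.c12

namespace GA
lemma mul_s' (u v : GA) : (u * v).s = u.s * v.s + u.c1 * v.c1 + u.c2 * v.c2 - u.c12 * v.c12 := rfl
lemma mul_c1' (u v : GA) : (u * v).c1 = u.s * v.c1 + u.c1 * v.s - u.c2 * v.c12 + u.c12 * v.c2 := rfl
lemma mul_c2' (u v : GA) : (u * v).c2 = u.s * v.c2 + u.c2 * v.s + u.c1 * v.c12 - u.c12 * v.c1 := rfl
lemma mul_c12' (u v : GA) : (u * v).c12 = u.s * v.c12 + u.c12 * v.s + u.c1 * v.c2 - u.c2 * v.c1 := rfl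
lemma transl_s (a b : ℝ) : (transl a b).s = 1 + -(a / 2 * 0) + b / 2 * 0 := rfl
lemma transl_c1 (a b : ℝ) : (transl a b).c1 = 0 + -(a / 2 * 0) + b / 2 * 0 := rfl
lemma transl_c2 (a b : ℝ) : (transl a b).c2 = 0 + -(a / 2 * 0) + b / 2 * 0 := rfl
lemma transl_c12 (a b : ℝ) : (transl a b).c12 = 0 + -(a / 2 * 0) + b / 2 * 0 := rfl
lemma translInv_s (a b : ℝ) : (translInv a b).s = 1 + a / 2 * 0 + -(b / 2 * 0) := rfl
lemma translInv_c1 (a b : ℝ) : (translInv a b).c1 = 0 + a / 2 * 0 + -(b / 2 * 0) := rfl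
lemma translInv_c2 (a b : ℝ) : (translInv a b).c2 = 0 + a / 2 * 0 + -(b / 2 * 0) := rfl
lemma translInv_c12 (a b : ℝ) : (translInv a b).c12 = 0 + a / 2 * 0 + -(b / 2 * 0) := rfl
lemma rot_s (θ : ℝ) : (rot θ).s = Real.cos (θ / 2) * 1 + -(Real.sin (θ / 2) * 0) := rfl
lemma rot_c1 (θ : ℝ) : (rot θ).c1 = Real.cos (θ / 2) * 0 + -(Real.sin (θ / 2) * 0) := rfl
lemma rot_c2 (θ : ℝ) : (rot θ).c2 = Real.cos (θ / 2) * 0 + -(Real.sin (θ / 2) * 0) := rfl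
lemma rot_c12 (θ : ℝ) : (rot θ).c12 = Real.cos (θ / 2) * 0 + -(Real.sin (θ / 2) * 1) := rfl
lemma rotInv_s (θ : ℝ) : (rotInv θ).s = Real.cos (θ / 2) * 1 + Real.sin (θ / 2) * 0 := rfl
lemma rotInv_c1 (θ : ℝ) : (rotInv θ).c1 = Real.cos (θ / 2) * 0 + Real.sin (θ / 2) * 0 := rfl
lemma rotInv_c2 (θ : ℝ) : (rotInv θ).c2 = Real.cos (θ / 2) * 0 + Real.sin (θ / 2) * 0 := rfl
lemma rotInv_c12 (θ : ℝ) : (rotInv θ).c12 = Real.cos (θ / 2) * 0 + Real.sin (θ / 2) * 1 := rfl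
end GA

/-- The inner product `⟨x, y⟩` is invariant under simultaneous sandwich conjugation by any
translation `t = 1 - (a/2) e₀₁ + (b/2) e₂₀` or rotation `r = cos(θ/2) - sin(θ/2) e₁₂`. -/

theorem iprod_invariant (a b θ : ℝ) (x y : GA) :
    iprod (transl a b * x * translInv a b) (transl a b * y * translInv a b) = iprod x y ∧
    iprod (rot θ * x * rotInv θ) (rot θ * y * rotInv θ) = iprod x y := by
  have h := Real.sin_sq_add_cos_sq (θ / 2)
  constructor <;>
    simp only [iprod, mul_s', mul_c1', mul_c2', mul_c12', transl_s, transl_c1, transl_c2,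
      transl_c12, translInv_s, translInv_c1, translInv_c2, translInv_c12, rot_s, rot_c1,
      rot_c2, rot_c12, rotInv_s, rotInv_c1, rotInv_c2, rotInv_c12]
  · ring
  · linear_combination ((Real.sin (θ / 2) ^ 2 + Real.cos (θ / 2) ^ 2 + 1) *
      (x.s * y.s + x.c1 * y.c1 + x.c2 * y.c2 + x.c12 * y.c12)) * h
end
end

section
/- The parametrized linear map φ(x) = Σ_{k=0}^{3} w_k ⟨x⟩_k + Σ_{k=0}^{2} v_k e₀⟨x⟩_k + Σ_{k=0}^{2} u_k e₀₁₂⟨x⟩_k on R*_{2,0,1} is SE(2)-equivariant: for any translation or rotation operator u (as encoded by t = 1 - (a/2)e₀₁ + (b/2)e₂₀ or r = cos(θ/2) - sin(θ/2)e₁₂) and any multivector x, φ(uxu⁻¹) = uφ(x)u⁻¹. -/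
noncomputable section

open GA

/-- Grade-0 projection `⟨x⟩₀` (as a multivector). -/
def proj0 (x : GA) : GA := ⟨x.s, 0, 0, 0, 0, 0, 0, 0⟩
/-- Grade-1 projection `⟨x⟩₁ = x₀e₀ + x₁e₁ + x₂e₂`. -/
def proj1 (x : GA) : GA := ⟨0, x.c0, x.c1, x.c2, 0, 0, 0, 0⟩
/-- Grade-2 projection `⟨x⟩₂ = x₀₁e₀₁ + x₂₀e₂₀ + x₁₂e₁₂`. -/
def proj2 (x : GA) : GA := ⟨0, 0, 0, 0, x.c01, x.c20, x.c12, 0⟩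
/-- Grade-3 projection `⟨x⟩₃ = x₀₁₂e₀₁₂`. -/
def proj3 (x : GA) : GA := ⟨0, 0, 0, 0, 0, 0, 0, x.c012⟩

/-- The parametrized linear map
`φ(x) = Σₖ wₖ ⟨x⟩ₖ + Σₖ vₖ e₀⟨x⟩ₖ + Σₖ uₖ e₀₁₂⟨x⟩ₖ`. -/
def phiMap (w₀ w₁ w₂ w₃ v₀ v₁ v₂ u₀ u₁ u₂ : ℝ) (x : GA) : GA :=
  w₀ • proj0 x + w₁ • proj1 x + w₂ • proj2 x + w₃ • proj3 x +
    v₀ • (e0 * proj0 x) + v₁ • (e0 * proj1 x) + v₂ • (e0 * proj2 x) +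
    u₀ • (e012 * proj0 x) + u₁ • (e012 * proj1 x) + u₂ • (e012 * proj2 x)


lemma GA.add_def (a b : GA) : a + b = ⟨a.s + b.s, a.c0 + b.c0, a.c1 + b.c1, a.c2 + b.c2,
    a.c01 + b.c01, a.c20 + b.c20, a.c12 + b.c12, a.c012 + b.c012⟩ := rfl
lemma GA.neg_def (a : GA) : -a = ⟨-a.s, -a.c0, -a.c1, -a.c2, -a.c01, -a.c20, -a.c12, -a.c012⟩ := rfl
lemma GA.sub_def (a b : GA) : a - b = a + -b := rfl
lemma GA.smul_def (r : ℝ) (a : GA) : r • a = ⟨r * a.s, r * a.c0, r * a.c1, r * a.c2,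
    r * a.c01, r * a.c20, r * a.c12, r * a.c012⟩ := rfl
lemma GA.one_def : (1 : GA) = ⟨1, 0, 0, 0, 0, 0, 0, 0⟩ := rfl
lemma GA.mul_def (a b : GA) : a * b =
    ⟨a.s * b.s + a.c1 * b.c1 + a.c2 * b.c2 - a.c12 * b.c12,
     a.s * b.c0 + a.c0 * b.s - a.c1 * b.c01 + a.c01 * b.c1 + a.c2 * b.c20 - a.c20 * b.c2
       - a.c12 * b.c012 - a.c012 * b.c12,
     a.s * b.c1 + a.c1 * b.s - a.c2 * b.c12 + a.c12 * b.c2,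
     a.s * b.c2 + a.c2 * b.s + a.c1 * b.c12 - a.c12 * b.c1,
     a.s * b.c01 + a.c01 * b.s + a.c0 * b.c1 - a.c1 * b.c0 + a.c20 * b.c12 - a.c12 * b.c20
       + a.c2 * b.c012 + a.c012 * b.c2,
     a.s * b.c20 + a.c20 * b.s + a.c2 * b.c0 - a.c0 * b.c2 - a.c01 * b.c12 + a.c12 * b.c01
       + a.c1 * b.c012 + a.c012 * b.c1,
     a.s * b.c12 + a.c12 * b.s + a.c1 * b.c2 - a.c2 * b.c1,
     a.s * b.c012 + a.c012 * b.s + a.c0 * b.c12 + a.c12 * b.c0 + a.c1 * b.c20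
       + a.c20 * b.c1 + a.c2 * b.c01 + a.c01 * b.c2⟩ := rfl

set_option maxHeartbeats 4000000 in
/-- The parametrized linear map `φ` is SE(2)-equivariant: it commutes with sandwich
conjugation by any translation or rotation operator. -/
theorem phiMap_equivariant (w₀ w₁ w₂ w₃ v₀ v₁ v₂ u₀ u₁ u₂ a b θ : ℝ) (x : GA) :
    phiMap w₀ w₁ w₂ w₃ v₀ v₁ v₂ u₀ u₁ u₂ (transl a b * x * translInv a b) =
        transl a b * phiMap w₀ w₁ w₂ w₃ v₀ v₁ v₂ u₀ u₁ u₂ x * translInv a b ∧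
    phiMap w₀ w₁ w₂ w₃ v₀ v₁ v₂ u₀ u₁ u₂ (rot θ * x * rotInv θ) =
        rot θ * phiMap w₀ w₁ w₂ w₃ v₀ v₁ v₂ u₀ u₁ u₂ x * rotInv θ := by
  constructor <;>
  · ext <;>
      simp only [phiMap, proj0, proj1, proj2, proj3, transl, translInv, rot, rotInv,
        e0, e1, e2, e01, e20, e12, e012, GA.mul_def, GA.add_def, GA.sub_def, GA.neg_def,
        GA.smul_def, GA.one_def] <;>
      ring
end
end

section
/- Define φ(q) = (q₁₂/(q₁₂²+ε))·(q₁₂², q₀₁²+q₂₀², q₀₁q₁₂, q₂₀q₁₂) and ψ(k) = (k₁₂/(k₁₂²+ε))·(-k₀₁²-k₂₀², -k₁₂², 2k₀₁k₁₂, 2k₂₀k₁₂) for multivectors q, k in R*_{2,0,1} with ε > 0. If the bivector components of q and k represent points with q₁₂ = k₁₂ = 1, then the Euclidean dot product φ(q)·ψ(k) equals -(1/(1+ε)²)·[(k₀₁-q₀₁)² + (k₂₀-q₂₀)²], i.e., it is proportional to the negative squared distance between the two encoded points. -/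
noncomputable section

open GA

/-- The distance-awareness query feature map `φ`. -/
def phiDA (ε : ℝ) (q : GA) : Fin 4 → ℝ :=
  (q.c12 / (q.c12 ^ 2 + ε)) •
    ![q.c12 ^ 2, q.c01 ^ 2 + q.c20 ^ 2, q.c01 * q.c12, q.c20 * q.c12]

/-- The distance-awareness key feature map `ψ`. -/
def psiDA (ε : ℝ) (k : GA) : Fin 4 → ℝ :=
  (k.c12 / (k.c12 ^ 2 + ε)) •
    ![-k.c01 ^ 2 - k.c20 ^ 2, -k.c12 ^ 2, 2 * k.c01 * k.c12, 2 * k.c20 * k.c12]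

/-- The Euclidean dot product on `ℝ⁴`. -/
def dot4 (u v : Fin 4 → ℝ) : ℝ := ∑ i, u i * v i

theorem dot4_smul_smul (a b : ℝ) (u v : Fin 4 → ℝ) :
    dot4 (a • u) (b • v) = a * b * dot4 u v := by
  simp only [dot4, Pi.smul_apply, smul_eq_mul, Finset.mul_sum]
  exact Finset.sum_congr rfl fun _ _ => by ring

theorem dot4_vecCons (a₀ a₁ a₂ a₃ b₀ b₁ b₂ b₃ : ℝ) :
    dot4 ![a₀, a₁, a₂, a₃] ![b₀, b₁, b₂, b₃] = a₀ * b₀ + a₁ * b₁ + a₂ * b₂ + a₃ * b₃ := by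
  simp [dot4, Fin.sum_univ_four]

-- Both prefactors become `1 / (1 + ε)`; what remains is `-|k|² - |q|² + 2 k·q = -|k - q|²`.
theorem distance_awareness_dot_general (ε : ℝ) (q k : GA)
    (hq : q.c12 = 1) (hk : k.c12 = 1) :
    dot4 (phiDA ε q) (psiDA ε k) =
      -(1 / (1 + ε) ^ 2) * ((k.c01 - q.c01) ^ 2 + (k.c20 - q.c20) ^ 2) := by
  rw [phiDA, psiDA, dot4_smul_smul, dot4_vecCons, hq, hk, one_pow, ← one_div_pow]
  ring

/-- If the bivector components of `q` and `k` represent points (`q₁₂ = k₁₂ = 1`), then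
`φ(q) · ψ(k)` is proportional to the negative squared distance between the two points. -/
theorem distance_awareness_dot (ε : ℝ) (hε : 0 < ε) (q k : GA)
    (hq : q.c12 = 1) (hk : k.c12 = 1) :
    dot4 (phiDA ε q) (psiDA ε k) =
      -(1 / (1 + ε) ^ 2) * ((k.c01 - q.c01) ^ 2 + (k.c20 - q.c20) ^ 2) :=
  distance_awareness_dot_general ε q k hq hk
end
end
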